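/- arXiv:1108.3681 — 2 statements merged into one kernel-verified Lean document; each statement's English description precedes it below -/
import Mathlib

section
/- Let p : Fin 2 → Fin 2 → ℝ satisfy 0 ≤ p i j ≤ 1 for all i, j and ∑_{i,j} p i j = 1, and set s_j := p 0 j + p 1 j. Then p 0 0 * p 1 1 ≠ p 0 1 * p 1 0 if and only if (s₀ > 0 and s₁ > 0 and p 0 0 * s₁ ≠ p 0 1 * s₀). -/
/-- Two-way numerical form of Theorem 2: the spookiness condition holds iff
Bob's test steers a non-trivial ensemble of two distinct conditional states. -/
theorem spooky_iff_steering
    (p : Fin 2 → Fin 2 → ℝ)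
    (hnn : ∀ i j, 0 ≤ p i j) (hle : ∀ i j, p i j ≤ 1)
    (hsum : ∑ i, ∑ j, p i j = 1)
    (s : Fin 2 → ℝ) (hs : ∀ j, s j = p 0 j + p 1 j) :
    p 0 0 * p 1 1 ≠ p 0 1 * p 1 0 ↔
      (0 < s 0 ∧ 0 < s 1 ∧ p 0 0 * s 1 ≠ p 0 1 * s 0) := by
  have hs0 := hs 0
  have hs1 := hs 1
  have key : p 0 0 * s 1 - p 0 1 * s 0 = p 0 0 * p 1 1 - p 0 1 * p 1 0 := by
    rw [hs0, hs1]; ring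
  constructor
  · intro h
    have hs0pos : 0 < s 0 := by
      rcases lt_or_eq_of_le (by rw [hs0]; exact add_nonneg (hnn 0 0) (hnn 1 0) : (0:ℝ) ≤ s 0) with h'|h'
      · exact h'
      · exfalso
        have h00 : p 0 0 = 0 := by nlinarith [hnn 0 0, hnn 1 0]
        have h10 : p 1 0 = 0 := by nlinarith [hnn 0 0, hnn 1 0]
        exact h (by rw [h00, h10]; ring)
    have hs1pos : 0 < s 1 := by
      rcases lt_or_eq_of_le (by rw [hs1]; exact add_nonneg (hnn 0 1) (hnn 1 1) : (0:ℝ) ≤ s 1) with h'|h'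
      · exact h'
      · exfalso
        have h01 : p 0 1 = 0 := by nlinarith [hnn 0 1, hnn 1 1]
        have h11 : p 1 1 = 0 := by nlinarith [hnn 0 1, hnn 1 1]
        exact h (by rw [h01, h11]; ring)
    refine ⟨hs0pos, hs1pos, fun hc => h ?_⟩
    nlinarith [key]
  · rintro ⟨_, _, h⟩ hc
    exact h (by nlinarith [key])
end

section
/- Let S be a nonempty type, N ≥ 1, and a : Fin (N+1) → Fin 2 → S → ℝ a family of binary tests: 0 ≤ a i j ρ ≤ 1 and a i 0 ρ + a i 1 ρ = 1 for all i, j, ρ. Call ρ sharp for test i if a i 0 ρ ∈ {0, 1}. Let φ be a finite subset of Fin (N+1) of maximal cardinality among subsets admitting a common sharp state (i.e., there exists ρ₀ sharp for every i ∈ φ, and every subset ψ admitting a common sharp state satisfies |ψ| ≤ |φ|), suppose φ is nonempty, and let l ∉ φ. Define the averaged test b j ρ := (1/|φ|) * ∑_{i ∈ φ} a i j ρ. Then there is no ρ ∈ S with both b 0 ρ ∈ {0, 1} and a l 0 ρ ∈ {0, 1}. -/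
/-- The footnote's reduction of many-proposition complementarity to the dual
case: if `φ` is a maximal-cardinality set of binary tests admitting a common
sharp state and `l ∉ φ`, then the uniform average of the tests in `φ` and the
test `l` have no common sharp state. -/
theorem complementarity_reduction
    {S : Type*} [Nonempty S] (N : ℕ) (hN : 1 ≤ N)
    (a : Fin (N + 1) → Fin 2 → S → ℝ)
    (ha0 : ∀ i j ρ, 0 ≤ a i j ρ) (ha1 : ∀ i j ρ, a i j ρ ≤ 1)
    (hanorm : ∀ i ρ, a i 0 ρ + a i 1 ρ = 1)
    (φ : Finset (Fin (N + 1)))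
    (hφne : φ.Nonempty)
    (hφsharp : ∃ ρ₀ : S, ∀ i ∈ φ, a i 0 ρ₀ ∈ ({0, 1} : Set ℝ))
    (hφmax : ∀ ψ : Finset (Fin (N + 1)),
      (∃ ρ : S, ∀ i ∈ ψ, a i 0 ρ ∈ ({0, 1} : Set ℝ)) → ψ.card ≤ φ.card)
    (l : Fin (N + 1)) (hl : l ∉ φ)
    (b : Fin 2 → S → ℝ)
    (hb : ∀ j ρ, b j ρ = (1 / (φ.card : ℝ)) * ∑ i ∈ φ, a i j ρ) :
    ¬ ∃ ρ : S, b 0 ρ ∈ ({0, 1} : Set ℝ) ∧ a l 0 ρ ∈ ({0, 1} : Set ℝ) := by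
  rintro ⟨ρ, hbρ, hlρ⟩
  have hcard : (0:ℝ) < (φ.card : ℝ) := by
    exact_mod_cast Finset.card_pos.mpr hφne
  have hsum : ∑ i ∈ φ, a i 0 ρ = b 0 ρ * φ.card := by
    rw [hb]; field_simp
  have hsharp : ∀ i ∈ φ, a i 0 ρ ∈ ({0, 1} : Set ℝ) := by
    rcases hbρ with h0 | h1
    · -- b 0 ρ = 0, so sum = 0, each term 0
      have hz : ∑ i ∈ φ, a i 0 ρ = 0 := by rw [hsum, h0]; ring
      intro i hi
      left
      have := (Finset.sum_eq_zero_iff_of_nonneg (fun j _ => ha0 j 0 ρ)).mp hz i hi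
      exact this
    · -- b 0 ρ = 1, so sum = card, each term 1
      have h1' : b 0 ρ = 1 := h1
      have hz : ∑ i ∈ φ, a i 0 ρ = ∑ _i ∈ φ, (1:ℝ) := by
        rw [hsum, h1', Finset.sum_const, one_mul, nsmul_eq_mul, mul_one]
      intro i hi
      right
      exact (Finset.sum_eq_sum_iff_of_le (fun j hj => ha1 j 0 ρ)).mp hz i hi
  have hψ : ∃ ρ' : S, ∀ i ∈ insert l φ, a i 0 ρ' ∈ ({0, 1} : Set ℝ) := by
    refine ⟨ρ, fun i hi => ?_⟩
    rcases Finset.mem_insert.mp hi with rfl | hi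
    · exact hlρ
    · exact hsharp i hi
  have := hφmax _ hψ
  rw [Finset.card_insert_of_notMem hl] at this
  omega
end
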